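/- In a finite symmetric zero-sum two-player game with antisymmetric payoff matrix A : Fin n → Fin n → ℝ, a pair of mixed strategies (x,y) ∈ Δ × Δ is a Nash equilibrium if and only if 𝒱(x) = 0 and 𝒱(y) = 0. (Theorem 3, second part.) -/

import Mathlib

/-!
Antisymmetry gives `U(x, y) = -U(y, x)`, hence `U(x, x) = 0` and `𝒱(x) ≤ 0`, with equality
exactly when `U(x, ·) ≥ 0` on `Δ`. At a Nash equilibrium, playing `y` against `y` and `x`
against `x` forces `U(x, y) = 0`, and the two best-response conditions then say precisely that
`U(x, ·)` and `U(y, ·)` are nonnegative on `Δ`; conversely these two facts give `U(x, y) = 0`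
and the best-response conditions.
-/

/-- The standard simplex of mixed strategies over `n` pure strategies. -/
def simplex (n : ℕ) : Set (Fin n → ℝ) :=
  {x | (∀ i, 0 ≤ x i) ∧ ∑ i, x i = 1}

/-- Player 1's expected payoff `U(x,y) = ∑ i, ∑ j, x i * A i j * y j`. -/
def pay {n : ℕ} (A : Fin n → Fin n → ℝ) (x y : Fin n → ℝ) : ℝ :=
  ∑ i, ∑ j, x i * A i j * y j

/-- `(x,y)` is a Nash equilibrium of the symmetric zero-sum game with matrix `A`. -/
def isNash {n : ℕ} (A : Fin n → Fin n → ℝ) (x y : Fin n → ℝ) : Prop :=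
  (∀ x' ∈ simplex n, pay A x' y ≤ pay A x y) ∧
  (∀ y' ∈ simplex n, pay A y' x ≤ pay A y x)

/-- The advantage `𝒱(x) = min_{y∈Δ} U(x,y)`. -/
noncomputable def adv {n : ℕ} (A : Fin n → Fin n → ℝ) (x : Fin n → ℝ) : ℝ :=
  sInf {v : ℝ | ∃ y ∈ simplex n, v = pay A x y}

section

variable {n : ℕ} {A : Fin n → Fin n → ℝ}

theorem simplex_eq_stdSimplex (n : ℕ) : simplex n = stdSimplex ℝ (Fin n) := rfl

theorem continuous_pay_right (A : Fin n → Fin n → ℝ) (x : Fin n → ℝ) :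
    Continuous (pay A x) := by
  unfold pay
  fun_prop

theorem bddBelow_pay_image_simplex (A : Fin n → Fin n → ℝ) (x : Fin n → ℝ) :
    BddBelow (pay A x '' simplex n) :=
  (simplex_eq_stdSimplex n ▸ isCompact_stdSimplex ℝ (Fin n)).bddBelow_image
    (continuous_pay_right A x).continuousOn

theorem adv_eq_sInf_image (A : Fin n → Fin n → ℝ) (x : Fin n → ℝ) :
    adv A x = sInf (pay A x '' simplex n) := by
  simp only [adv, Set.image, eq_comm]

theorem pay_antisymm (hA : ∀ i j, A j i = -A i j) (u v : Fin n → ℝ) :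
    pay A u v = -pay A v u := by
  simp only [pay, ← Finset.sum_neg_distrib]
  rw [Finset.sum_comm]
  refine Finset.sum_congr rfl fun i _ => Finset.sum_congr rfl fun j _ => ?_
  rw [hA]
  ring

theorem pay_self (hA : ∀ i j, A j i = -A i j) (u : Fin n → ℝ) : pay A u u = 0 := by
  linarith [pay_antisymm hA u u]

theorem adv_eq_zero_iff (hA : ∀ i j, A j i = -A i j) {x : Fin n → ℝ} (hx : x ∈ simplex n) :
    adv A x = 0 ↔ ∀ y ∈ simplex n, 0 ≤ pay A x y := by
  have hzero : (0 : ℝ) ∈ pay A x '' simplex n := ⟨x, hx, pay_self hA x⟩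
  have hbdd := bddBelow_pay_image_simplex A x
  rw [adv_eq_sInf_image]
  constructor
  · intro h y hy
    exact h ▸ csInf_le hbdd (Set.mem_image_of_mem _ hy)
  · intro h
    refine le_antisymm (csInf_le hbdd hzero) (le_csInf ⟨0, hzero⟩ ?_)
    rintro _ ⟨y, hy, rfl⟩
    exact h y hy

end

/-- Theorem 3 (second part): in a finite symmetric zero-sum two-player game,
`(x,y)` is a Nash equilibrium if and only if `𝒱(x) = 0` and `𝒱(y) = 0`. -/
theorem nash_iff_advantages_zero {n : ℕ} (A : Fin n → Fin n → ℝ)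
    (hA : ∀ i j, A j i = -A i j)
    (x y : Fin n → ℝ) (hx : x ∈ simplex n) (hy : y ∈ simplex n) :
    isNash A x y ↔ (adv A x = 0 ∧ adv A y = 0) := by
  rw [adv_eq_zero_iff hA hx, adv_eq_zero_iff hA hy]
  have anti := pay_antisymm hA
  constructor
  · rintro ⟨hxbest, hybest⟩
    have hxy : pay A x y = 0 := by
      linarith [hxbest y hy, hybest x hx, pay_self hA x, pay_self hA y, anti x y]
    exact ⟨fun y' hy' => by linarith [hybest y' hy', anti y' x, anti x y],
      fun x' hx' => by linarith [hxbest x' hx', anti x' y]⟩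
  · rintro ⟨hxnonneg, hynonneg⟩
    have hxy : pay A x y = 0 := by linarith [hxnonneg y hy, hynonneg x hx, anti x y]
    exact ⟨fun x' hx' => by linarith [hynonneg x' hx', anti x' y],
      fun y' hy' => by linarith [hxnonneg y' hy', anti y' x, anti x y]⟩
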